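/- arXiv:2009.08847 — 2 statements merged into one kernel-verified Lean document; each statement's English description precedes it below -/
import Mathlib

section
/- Let X be binomial with S trials and success probability p = 1/2 + 1/(2n) where n ≥ 2. If Pr[X ≤ S/2] ≤ n^(−c) for some c ≥ 1, then S ≥ K·n² for some absolute constant K > 0 (for all sufficiently large n). -/
/-!
Write `p = (1 + x) / 2` with `x = 1 / n`. For `2k ≤ S` the likelihood ratio of `Binomial(S, p)`
against `Binomial(S, 1/2)` at `k` is `(1 - x²)^k (1 - x)^(S - 2k)`, which by Bernoulli's
inequality and `(S - 2k) x ≤ (S - 2k)² x² + 1/4` is at least `3/4 - S x² - x² (S - 2k)²`. The lower half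
`2k ≤ S` carries at least half of the symmetric binomial mass, and the second moment
`∑ C(S, k) (S - 2k)² = S 2^S` controls the last term, so `Pr[X ≤ S/2] ≥ 3/8 - 2 S / n²`.
Hence `S < n² / 16` would give `Pr[X ≤ S/2] > 1/4 > n^(-c)` as soon as `n ≥ 5`.
-/

open Finset

theorem sum_range_choose_mul_sub_two_mul_sq (S : ℕ) :
    ∑ k ∈ range (S + 1), (S.choose k : ℝ) * ((S : ℝ) - 2 * k) ^ 2 = (S : ℝ) * 2 ^ S := by
  induction S with
  | zero => simp
  | succ S ih =>
    have hpow : ∑ k ∈ range (S + 1), (S.choose k : ℝ) = 2 ^ S := by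
      exact_mod_cast Nat.sum_range_choose S
    -- Pascal's rule splits a term `(S + 1 - 2k)²` into `(S - 2k + 1)² + (S - 2k - 1)²`.
    rw [Nat.cast_succ, sum_choose_succ_mul (fun k _ => ((S + 1 : ℝ) - 2 * k) ^ 2) S,
      ← sum_add_distrib]
    calc ∑ k ∈ range (S + 1), ((S.choose k : ℝ) * ((S + 1 : ℝ) - 2 * k) ^ 2
          + (S.choose k : ℝ) * ((S + 1 : ℝ) - 2 * (k + 1 : ℕ)) ^ 2)
        = 2 * ∑ k ∈ range (S + 1), (S.choose k : ℝ) * ((S : ℝ) - 2 * k) ^ 2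
          + 2 * ∑ k ∈ range (S + 1), (S.choose k : ℝ) := by
          rw [mul_sum, mul_sum, ← sum_add_distrib]
          refine sum_congr rfl fun k _ => ?_
          push_cast
          ring
      _ = (S + 1) * 2 ^ (S + 1) := by
          rw [ih, hpow]
          ring

theorem two_pow_le_two_mul_sum_choose_filter_two_mul_le (S : ℕ) :
    (2 : ℝ) ^ S ≤ 2 * ∑ k ∈ range (S + 1) with 2 * k ≤ S, (S.choose k : ℝ) := by
  have hreflect : ∑ k ∈ range (S + 1) with S ≤ 2 * k, (S.choose k : ℝ)
      = ∑ k ∈ range (S + 1) with 2 * k ≤ S, (S.choose k : ℝ) := by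
    rw [sum_filter, sum_filter, ← sum_range_reflect]
    refine sum_congr rfl fun k hk => ?_
    have hkS : k ≤ S := Nat.lt_succ_iff.mp (mem_range.mp hk)
    rw [Nat.add_sub_cancel, Nat.choose_symm hkS]
    exact if_congr (by omega) rfl rfl
  calc (2 : ℝ) ^ S = ∑ k ∈ range (S + 1), (S.choose k : ℝ) := by
        exact_mod_cast (Nat.sum_range_choose S).symm
    _ ≤ ∑ k ∈ range (S + 1) with 2 * k ≤ S, (S.choose k : ℝ)
        + ∑ k ∈ range (S + 1) with S ≤ 2 * k, (S.choose k : ℝ) := by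
        rw [sum_filter, sum_filter, ← sum_add_distrib]
        gcongr with k
        split_ifs <;> first | omega | simp
    _ = 2 * ∑ k ∈ range (S + 1) with 2 * k ≤ S, (S.choose k : ℝ) := by
        rw [hreflect, two_mul]

theorem one_sub_mul_sq_sub_mul_le_one_add_pow_mul_one_sub_pow {x : ℝ} (hx₀ : 0 ≤ x) (hx₁ : x ≤ 1)
    (k j : ℕ) : 1 - k * x ^ 2 - j * x ≤ (1 + x) ^ k * (1 - x) ^ (k + j) := by
  have hsq : 1 - k * x ^ 2 ≤ (1 - x ^ 2) ^ k := by
    simpa [sub_eq_add_neg] using one_add_mul_le_pow (a := -x ^ 2) (by nlinarith) k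
  have hlin : 1 - j * x ≤ (1 - x) ^ j := by
    simpa [sub_eq_add_neg] using one_add_mul_le_pow (a := -x) (by linarith) j
  have hsq₁ : (1 - x ^ 2) ^ k ≤ 1 := pow_le_one₀ (by nlinarith) (by nlinarith)
  have hlin₁ : (1 - x) ^ j ≤ 1 := pow_le_one₀ (by linarith) (by linarith)
  rw [pow_add, ← mul_assoc, ← mul_pow, show (1 + x) * (1 - x) = 1 - x ^ 2 by ring]
  nlinarith [mul_nonneg (sub_nonneg.mpr hsq₁) (sub_nonneg.mpr hlin₁)]

theorem two_pow_mul_binomial_weight {x : ℝ} (k j : ℕ) :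
    2 ^ (2 * k + j) * (((1 + x) / 2) ^ k * (1 - (1 + x) / 2) ^ (2 * k + j - k))
      = (1 + x) ^ k * (1 - x) ^ (k + j) := by
  rw [show 2 * k + j - k = k + j by omega, show 1 - (1 + x) / 2 = (1 - x) / 2 by ring,
    div_pow, div_pow]
  field_simp
  ring

theorem three_eighths_sub_le_sum_binomial_two_mul_le {x : ℝ} (hx₀ : 0 ≤ x) (hx₁ : x ≤ 1)
    (S : ℕ) :
    3 / 8 - 2 * S * x ^ 2 ≤ ∑ k ∈ range (S + 1),
      (if 2 * k ≤ S then (S.choose k : ℝ) * ((1 + x) / 2) ^ k * (1 - (1 + x) / 2) ^ (S - k)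
        else 0) := by
  rw [← sum_filter]
  set s := {k ∈ range (S + 1) | 2 * k ≤ S}
  have hs : s ⊆ range (S + 1) := filter_subset _ _
  have hhalf : (2 : ℝ) ^ S ≤ 2 * ∑ k ∈ s, (S.choose k : ℝ) :=
    two_pow_le_two_mul_sum_choose_filter_two_mul_le S
  have hmass : ∑ k ∈ s, (S.choose k : ℝ) ≤ 2 ^ S := by
    refine (sum_le_sum_of_subset_of_nonneg hs fun _ _ _ => by positivity).trans_eq ?_
    exact_mod_cast Nat.sum_range_choose S
  have hvar : ∑ k ∈ s, (S.choose k : ℝ) * ((S : ℝ) - 2 * k) ^ 2 ≤ (S : ℝ) * 2 ^ S :=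
    (sum_le_sum_of_subset_of_nonneg hs fun _ _ _ => by positivity).trans_eq
      (sum_range_choose_mul_sub_two_mul_sq S)
  have hterm : ∀ k ∈ s, (S.choose k : ℝ) * (3 / 4 - S * x ^ 2 - x ^ 2 * ((S : ℝ) - 2 * k) ^ 2)
      ≤ 2 ^ S * ((S.choose k : ℝ) * ((1 + x) / 2) ^ k * (1 - (1 + x) / 2) ^ (S - k)) := by
    intro k hk
    obtain ⟨j, rfl⟩ := Nat.exists_eq_add_of_le (mem_filter.mp hk).2
    rw [mul_assoc (_ : ℝ), mul_left_comm, two_pow_mul_binomial_weight]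
    gcongr
    refine le_trans ?_ (one_sub_mul_sq_sub_mul_le_one_add_pow_mul_one_sub_pow hx₀ hx₁ k j)
    push_cast
    nlinarith [sq_nonneg (j * x - 1 / 2), sq_nonneg x]
  have hsum := sum_le_sum hterm
  rw [← mul_sum] at hsum
  have hsplit : ∑ k ∈ s, (S.choose k : ℝ) * (3 / 4 - S * x ^ 2 - x ^ 2 * ((S : ℝ) - 2 * k) ^ 2)
      = (3 / 4 - S * x ^ 2) * ∑ k ∈ s, (S.choose k : ℝ)
        - x ^ 2 * ∑ k ∈ s, (S.choose k : ℝ) * ((S : ℝ) - 2 * k) ^ 2 := by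
    rw [mul_sum, mul_sum, ← sum_sub_distrib]
    exact sum_congr rfl fun k _ => by ring
  have hSx : 0 ≤ (S : ℝ) * x ^ 2 := by positivity
  refine le_of_mul_le_mul_left ?_ (by positivity : (0 : ℝ) < 2 ^ S)
  nlinarith [mul_le_mul_of_nonneg_left hmass hSx, mul_le_mul_of_nonneg_left hvar (sq_nonneg x)]

/-- For `X ~ Binomial(S, 1/2 + 1/(2n))` with `n ≥ 2`: for every `c ≥ 1` there is a
constant `K > 0` such that for all sufficiently large `n`, if
`Pr[X ≤ S/2] ≤ n^(−c)` then `S ≥ K·n²`. -/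
theorem majority_sample_lower_bound (c : ℝ) (hc : 1 ≤ c) :
    ∃ K : ℝ, 0 < K ∧ ∃ N₀ : ℕ, 2 ≤ N₀ ∧ ∀ n : ℕ, N₀ ≤ n → ∀ S : ℕ,
      (∑ k ∈ Finset.range (S + 1),
          (if 2 * k ≤ S then
            (S.choose k : ℝ) * (1/2 + 1/(2*(n:ℝ)))^k * (1 - (1/2 + 1/(2*(n:ℝ))))^(S - k)
          else 0)) ≤ (n : ℝ) ^ (-c) →
      K * (n : ℝ)^2 ≤ (S : ℝ) := by
  refine ⟨1 / 16, by norm_num, 5, by norm_num, fun n hn S htail => ?_⟩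
  have hn5 : (5 : ℝ) ≤ n := by exact_mod_cast hn
  rw [show 1 / 2 + 1 / (2 * (n : ℝ)) = (1 + (n : ℝ)⁻¹) / 2 by ring] at htail
  have htail_lower := three_eighths_sub_le_sum_binomial_two_mul_le (x := (n : ℝ)⁻¹)
    (by positivity) (inv_le_one_of_one_le₀ (by linarith)) S
  have hrpow : (n : ℝ) ^ (-c) ≤ (n : ℝ)⁻¹ := by
    rw [← Real.rpow_neg_one]
    exact Real.rpow_le_rpow_of_exponent_le (by linarith) (by linarith)
  have hinv : (n : ℝ)⁻¹ ≤ 1 / 5 := by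
    rw [one_div]
    exact inv_anti₀ (by norm_num) hn5
  have hSn : 1 / 16 ≤ (S : ℝ) / (n : ℝ) ^ 2 := by
    rw [div_eq_mul_inv (S : ℝ), ← inv_pow]
    linarith
  rwa [le_div_iff₀ (by positivity)] at hSn
end

section
/- Let X be binomial with S = a·n·log n trials (a > 0 a constant) and success probability p = 1/2 + δ with 0 < δ ≤ 1/3. If Pr[X ≤ S/2] ≤ n^(−c) for some c ≥ 1, then δ ≥ K/√n for some constant K > 0 (for all sufficiently large n). -/
open Finset

lemma exp_neg_two_le (x : ℝ) (h0 : 0 ≤ x) (h1 : x ≤ 1/2) : Real.exp (-(2*x)) ≤ 1 - x := by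
  have h := Real.add_one_le_exp (2*x)
  have hpos : (0:ℝ) < Real.exp (2*x) := Real.exp_pos _
  rw [Real.exp_neg, inv_le_iff_one_le_mul₀ hpos]
  nlinarith

lemma choose_descent (S m t : ℕ) (h2m : 2*m ≤ S) (htm : t ≤ m) :
    ∀ j, j ≤ t → Nat.choose S m * (m - t)^j ≤ (S - m + t)^j * Nat.choose S (m - j) := by
  intro j
  induction j with
  | zero => simp
  | succ j ih =>
    intro hj
    have hj' : j ≤ t := by omega
    have IH := ih hj'
    have hmj : m - j = (m - (j+1)) + 1 := by omega
    have key := Nat.choose_succ_right_eq S (m - (j+1))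
    rw [← hmj] at key
    have hS1 : S - (m - (j+1)) = S - m + (j+1) := by omega
    rw [hS1] at key
    have hpos : 0 < S - m + (j+1) := by omega
    apply Nat.le_of_mul_le_mul_right _ hpos
    calc Nat.choose S m * (m - t) ^ (j+1) * (S - m + (j+1))
        = (Nat.choose S m * (m-t)^j) * ((m - t) * (S - m + (j+1))) := by ring
      _ ≤ ((S - m + t)^j * Nat.choose S (m - j)) * ((m - j) * (S - m + t)) := by
          apply Nat.mul_le_mul IH
          apply Nat.mul_le_mul <;> omega
      _ = (S - m + t)^(j+1) * (Nat.choose S (m-j) * (m - j)) := by ring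
      _ = (S - m + t)^(j+1) * (Nat.choose S (m - (j+1)) * (S - m + (j+1))) := by rw [key]
      _ = (S - m + t) ^ (j + 1) * Nat.choose S (m - (j + 1)) * (S - m + (j + 1)) := by ring

lemma two_pow_le_central (S m : ℕ) (hm : m = S/2) (hS : 8 ≤ S) : 2^S ≤ S * Nat.choose S m := by
  have hm4 : 4 ≤ m := by omega
  have h := Nat.four_pow_lt_mul_centralBinom m hm4
  rw [Nat.centralBinom] at h
  rcases Nat.even_or_odd S with he | ho
  · have hS2 : S = 2*m := by obtain ⟨k,hk⟩ := he; omega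
    subst hS2
    calc 2^(2*m) = 4^m := by rw [pow_mul]; norm_num
      _ ≤ m * Nat.choose (2*m) m := h.le
      _ ≤ 2*m * Nat.choose (2*m) m := by nlinarith [Nat.choose_pos (show m ≤ 2*m by omega)]
  · have hS2 : S = 2*m + 1 := by rcases ho with ⟨k,hk⟩; omega
    subst hS2
    have hcc : Nat.choose (2*m) m ≤ Nat.choose (2*m+1) m := Nat.choose_le_choose m (by omega)
    calc 2^(2*m+1) = 2 * 4^m := by rw [pow_succ, pow_mul]; norm_num; ring
      _ ≤ 2 * (m * Nat.choose (2*m) m) := Nat.mul_le_mul_left 2 h.le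
      _ ≤ (2*m+1) * Nat.choose (2*m+1) m := by nlinarith

/-- ratio lower bound : r^t ≥ 1/2 -/
lemma ratio_half (S m t : ℕ) (h2m : 2*m ≤ S) (hS2m : S ≤ 2*m + 1) (htm : t ≤ m)
    (h8t : 8*t*t + 4*t ≤ S) (hS : 144 ≤ S) :
    (1:ℝ)/2 ≤ (((m:ℝ) - t) / ((S:ℝ) - m + t))^t := by
  have hcast2m : 2*(m:ℝ) ≤ S := by exact_mod_cast h2m
  have hcastS2m : (S:ℝ) ≤ 2*m + 1 := by exact_mod_cast hS2m
  have hcasttm : (t:ℝ) ≤ m := by exact_mod_cast htm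
  have hcast8t : 8*(t:ℝ)*t + 4*t ≤ S := by exact_mod_cast h8t
  have hcastS : (144:ℝ) ≤ S := by exact_mod_cast hS
  have ht0 : (0:ℝ) ≤ t := Nat.cast_nonneg t
  have hS0 : (0:ℝ) < S := by linarith
  have hD_pos : (0:ℝ) < (S:ℝ) - m + t := by linarith
  have hx : (1:ℝ) - (4*(t:ℝ)+2)/S ≤ ((m:ℝ) - t) / ((S:ℝ) - m + t) := by
    rw [le_div_iff₀ hD_pos]
    have key : (2*(t:ℝ)+1) ≤ (4*(t:ℝ)+2)/S * ((S:ℝ) - m + t) := by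
      rw [← sub_nonneg]
      have heq : (4*(t:ℝ)+2)/S * ((S:ℝ) - m + t) - (2*(t:ℝ)+1)
          = (4*(t:ℝ)+2) * (((S:ℝ) - m + t) - (S:ℝ)/2) / S := by
        field_simp; ring
      rw [heq]
      apply div_nonneg _ hS0.le
      apply mul_nonneg (by linarith) (by linarith)
    nlinarith
  have hx0 : (0:ℝ) ≤ 1 - (4*(t:ℝ)+2)/S := by
    rw [sub_nonneg, div_le_one hS0]; nlinarith
  have hb := one_add_mul_le_pow (a := -((4*(t:ℝ)+2)/S)) (by nlinarith [div_nonneg (by linarith : (0:ℝ) ≤ 4*(t:ℝ)+2) hS0.le]) t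
  have hbp : (1 - (4*(t:ℝ)+2)/S)^t ≤ (((m:ℝ) - t) / ((S:ℝ) - m + t))^t :=
    pow_le_pow_left₀ hx0 hx t
  have hhalf : (1:ℝ)/2 ≤ 1 + (t:ℝ) * (-((4*(t:ℝ)+2)/S)) := by
    rw [← sub_nonneg]
    have heq : 1 + (t:ℝ) * (-((4*(t:ℝ)+2)/S)) - 1/2 = ((S:ℝ) - (8*t*t + 4*t)) / (2*S) := by
      field_simp; ring
    rw [heq]
    apply div_nonneg (by linarith) (by linarith)
  calc (1:ℝ)/2 ≤ 1 + (t:ℝ) * (-((4*(t:ℝ)+2)/S)) := hhalf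
    _ ≤ (1 + (-((4*(t:ℝ)+2)/S)))^t := hb
    _ = (1 - (4*(t:ℝ)+2)/S)^t := by ring_nf
    _ ≤ _ := hbp

/-- each window term is at least B -/
lemma term_ge (S m t k : ℕ) (δ : ℝ) (hδ0 : 0 < δ) (hδ8 : δ ≤ 1/8) (hS1 : 1 ≤ S)
    (h2m : 2*m ≤ S) (htm : t ≤ m) (hk1 : m - t ≤ k) (hk2 : k ≤ m) :
    (S.choose m : ℝ) * (((m:ℝ) - t) / ((S:ℝ) - m + t))^t *
      ((1/2 + δ)^m * (1/2 - δ)^(S - m) * ((1/2 - δ)/(1/2 + δ))^t)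
    ≤ (S.choose k : ℝ) * (1/2 + δ)^k * (1/2 - δ)^(S - k) := by
  have hmS : m ≤ S := by omega
  have hp0 : (0:ℝ) < 1/2 + δ := by linarith
  have hq0 : (0:ℝ) ≤ 1/2 - δ := by linarith
  have hqp : (1:ℝ)/2 - δ ≤ 1/2 + δ := by linarith
  have hcasttm : (t:ℝ) ≤ m := by exact_mod_cast htm
  have hcastmS : (m:ℝ) ≤ S := by exact_mod_cast hmS
  have hD_pos : (0:ℝ) < (S:ℝ) - m + t := by
    have ht0 : (0:ℝ) ≤ t := Nat.cast_nonneg t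
    have h2 : 2*(m:ℝ) ≤ S := by exact_mod_cast h2m
    have hS1' : (1:ℝ) ≤ S := by exact_mod_cast hS1
    linarith
  have hN0 : (0:ℝ) ≤ (m:ℝ) - t := by linarith
  have hr0 : (0:ℝ) ≤ ((m:ℝ) - t) / ((S:ℝ) - m + t) := div_nonneg hN0 hD_pos.le
  have hr1 : ((m:ℝ) - t) / ((S:ℝ) - m + t) ≤ 1 := by
    rw [div_le_one hD_pos]
    have h2 : 2*(m:ℝ) ≤ S := by exact_mod_cast h2m
    have ht0 : (0:ℝ) ≤ t := Nat.cast_nonneg t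
    linarith
  set j : ℕ := m - k with hj_def
  have hjt : j ≤ t := by omega
  have hC : (S.choose m : ℝ) * (((m:ℝ) - t) / ((S:ℝ) - m + t))^t ≤ (S.choose k : ℝ) := by
    have hnat := choose_descent S m t h2m htm j hjt
    have hmjk : m - j = k := by omega
    rw [hmjk] at hnat
    have hreal := (Nat.cast_le (α := ℝ)).mpr hnat
    push_cast [Nat.cast_sub htm, Nat.cast_sub hmS] at hreal
    have hDj : (0:ℝ) < ((S:ℝ) - m + t)^j := by positivity
    have hrj : (S.choose m : ℝ) * (((m:ℝ) - t) / ((S:ℝ) - m + t))^j ≤ (S.choose k : ℝ) := by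
      rw [div_pow, ← mul_div_assoc, div_le_iff₀ hDj]
      nlinarith [hreal]
    have hmono : (((m:ℝ) - t) / ((S:ℝ) - m + t))^t ≤ (((m:ℝ) - t) / ((S:ℝ) - m + t))^j :=
      pow_le_pow_of_le_one hr0 hr1 hjt
    have hCm0 : (0:ℝ) ≤ (S.choose m : ℝ) := Nat.cast_nonneg _
    nlinarith
  have hpq : (1/2 + δ)^m * (1/2 - δ)^(S - m) * ((1/2 - δ)/(1/2 + δ))^t
      ≤ (1/2 + δ)^k * (1/2 - δ)^(S - k) := by
    set u : ℕ := t - j with hu_def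
    have h1 : t = u + j := by omega
    have h2 : k + t = m + u := by omega
    have h3 : S - k = (S - m) + j := by omega
    have hpt : (0:ℝ) < (1/2 + δ)^t := by positivity
    rw [div_pow, ← mul_div_assoc, div_le_iff₀ hpt]
    calc (1/2 + δ)^m * (1/2 - δ)^(S - m) * (1/2 - δ)^t
        = ((1/2 + δ)^m * (1/2 - δ)^(S-m) * (1/2-δ)^j) * (1/2-δ)^u := by
          rw [h1, pow_add]; ring
      _ ≤ ((1/2 + δ)^m * (1/2 - δ)^(S-m) * (1/2-δ)^j) * (1/2+δ)^u := by
          apply mul_le_mul_of_nonneg_left (pow_le_pow_left₀ hq0 hqp u) (by positivity)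
      _ = (1/2 + δ)^(m+u) * (1/2 - δ)^((S-m)+j) := by rw [pow_add, pow_add]; ring
      _ = (1/2 + δ)^k * (1/2 - δ)^(S - k) * (1/2 + δ)^t := by
          rw [← h2, ← h3, pow_add]; ring
  have hg0 : (0:ℝ) ≤ (1/2 + δ)^m * (1/2 - δ)^(S - m) * ((1/2 - δ)/(1/2 + δ))^t := by
    positivity
  calc (S.choose m : ℝ) * (((m:ℝ) - t) / ((S:ℝ) - m + t))^t *
      ((1/2 + δ)^m * (1/2 - δ)^(S - m) * ((1/2 - δ)/(1/2 + δ))^t)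
      ≤ (S.choose k : ℝ) * ((1/2 + δ)^m * (1/2 - δ)^(S - m) * ((1/2 - δ)/(1/2 + δ))^t) :=
        mul_le_mul_of_nonneg_right hC hg0
    _ ≤ (S.choose k : ℝ) * ((1/2 + δ)^k * (1/2 - δ)^(S - k)) :=
        mul_le_mul_of_nonneg_left hpq (Nat.cast_nonneg _)
    _ = (S.choose k : ℝ) * (1/2 + δ)^k * (1/2 - δ)^(S - k) := by ring
set_option maxHeartbeats 1600000 in
/-- Lower bound for the lower-tail binomial sum, for abstract S. -/
lemma window_lb (S : ℕ) (hS : 144 ≤ S) (δ : ℝ) (hδ0 : 0 < δ) (hδ8 : δ ≤ 1/8) :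
    Real.exp (-(8*δ^2*((S/2 : ℕ):ℝ) + 8*δ*(((Nat.sqrt S)/3 : ℕ):ℝ))) / (36 * Real.sqrt S) ≤
    ∑ k ∈ Finset.range (S+1),
      (if 2*k ≤ S then (S.choose k : ℝ) * (1/2+δ)^k * (1/2-δ)^(S-k) else 0) := by
  obtain ⟨m, hm_def⟩ : ∃ m, m = S/2 := ⟨_, rfl⟩
  obtain ⟨sq, hsq_def⟩ : ∃ s, s = Nat.sqrt S := ⟨_, rfl⟩
  obtain ⟨t, ht_def⟩ : ∃ t, t = sq/3 := ⟨_, rfl⟩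
  rw [← hm_def, ← hsq_def, ← ht_def]
  have hsq12 : 12 ≤ sq := by rw [hsq_def]; exact Nat.le_sqrt.mpr (by omega)
  have hsqS : sq * sq ≤ S := by rw [hsq_def]; exact Nat.sqrt_le S
  have hsq12S : 12 * sq ≤ S := le_trans (Nat.mul_le_mul_right sq hsq12) hsqS
  have h2m : 2 * m ≤ S := by omega
  have hS2m : S ≤ 2*m + 1 := by omega
  have htm : t ≤ m := by omega
  have hmS : m ≤ S := by omega
  have h8t : 8*t*t + 4*t ≤ S := by nlinarith [hsqS, hsq12S, (by omega : 3*t ≤ sq)]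
  have hp0 : (0:ℝ) < 1/2 + δ := by linarith
  have hq0 : (0:ℝ) ≤ 1/2 - δ := by linarith
  have hq6 : (1:ℝ)/6 ≤ 1/2 - δ := by linarith
  have hrt_half := ratio_half S m t h2m hS2m htm h8t hS
  have hS0 : (0:ℝ) < S := by
    have : (144:ℝ) ≤ S := by exact_mod_cast hS
    linarith
  -- B and its lower bound
  set r : ℝ := ((m:ℝ) - t) / ((S:ℝ) - m + t) with hr_def
  set B : ℝ := (S.choose m : ℝ) * r^t *
      ((1/2 + δ)^m * (1/2 - δ)^(S - m) * ((1/2 - δ)/(1/2 + δ))^t) with hB_def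
  have hB_lb : Real.exp (-(8*δ^2*(m:ℝ) + 8*δ*(t:ℝ))) / (12 * S) ≤ B := by
    obtain ⟨e, he_def⟩ : ∃ e, e = S - 2*m := ⟨_, rfl⟩
    have he01 : e = 0 ∨ e = 1 := by omega
    have hSm : S - m = m + e := by omega
    have hBeq : B = ((S.choose m : ℝ) * (1/4)^m) * ((1 - 4*δ^2)^m *
        ((1/2 - δ)^e * (r^t * ((1/2 - δ)/(1/2 + δ))^t))) := by
      rw [hB_def, hSm, pow_add]
      have h44 : (1/2 + δ)^m * (1/2 - δ)^m = ((1/4) * (1 - 4*δ^2))^m := by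
        rw [← mul_pow]; congr 1; ring
      rw [show (1/2 + δ)^m * ((1/2 - δ)^m * (1/2 - δ)^e) *
            ((1/2 - δ)/(1/2 + δ))^t =
          ((1/2 + δ)^m * (1/2 - δ)^m) * ((1/2 - δ)^e * ((1/2 - δ)/(1/2 + δ))^t) by ring,
        h44, mul_pow]
      ring
    have hf1 : 1/(S:ℝ) ≤ (S.choose m : ℝ) * (1/4)^m := by
      have c1 : ((2:ℝ))^S ≤ (S:ℝ) * (S.choose m : ℝ) := by
        have := (Nat.cast_le (α := ℝ)).mpr (two_pow_le_central S m hm_def (by omega))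
        push_cast at this; linarith
      have c2 : ((4:ℝ))^m ≤ 2^S := by
        rw [show (4:ℝ) = 2^2 by norm_num, ← pow_mul]
        exact pow_le_pow_right₀ (by norm_num) (by omega)
      have h4m : (0:ℝ) < (4:ℝ)^m := by positivity
      have heq : (S.choose m : ℝ) * (1/4)^m = (S.choose m : ℝ) / 4^m := by
        rw [div_pow, one_pow]; ring
      rw [heq, div_le_div_iff₀ hS0 h4m]
      nlinarith
    have hf2 : Real.exp (-(8*δ^2*(m:ℝ))) ≤ (1 - 4*δ^2)^m := by
      have e1 : Real.exp (-(2*(4*δ^2))) ≤ 1 - 4*δ^2 :=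
        exp_neg_two_le _ (by positivity) (by nlinarith)
      calc Real.exp (-(8*δ^2*(m:ℝ))) = Real.exp (-(2*(4*δ^2)))^m := by
            rw [← Real.exp_nat_mul]; congr 1; ring
        _ ≤ (1 - 4*δ^2)^m := pow_le_pow_left₀ (Real.exp_nonneg _) e1 m
    have hf3 : (1:ℝ)/6 ≤ (1/2 - δ)^e := by
      rcases he01 with h | h <;> rw [h] <;> simp <;> linarith
    have hf4 : Real.exp (-(8*δ*(t:ℝ))) ≤ ((1/2 - δ)/(1/2 + δ))^t := by
      have e1 : Real.exp (-(2*(4*δ))) ≤ 1 - 4*δ :=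
        exp_neg_two_le _ (by positivity) (by linarith)
      have e2 : (1:ℝ) - 4*δ ≤ (1/2 - δ)/(1/2 + δ) := by
        rw [le_div_iff₀ hp0]; nlinarith
      calc Real.exp (-(8*δ*(t:ℝ))) = Real.exp (-(2*(4*δ)))^t := by
            rw [← Real.exp_nat_mul]; congr 1; ring
        _ ≤ ((1/2 - δ)/(1/2 + δ))^t :=
            pow_le_pow_left₀ (Real.exp_nonneg _) (le_trans e1 e2) t
    have lhs_eq : Real.exp (-(8*δ^2*(m:ℝ) + 8*δ*(t:ℝ))) / (12 * S) =
        (1/(S:ℝ)) * (Real.exp (-(8*δ^2*(m:ℝ))) * ((1/6) * ((1/2) * Real.exp (-(8*δ*(t:ℝ)))))) := by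
      rw [show -(8*δ^2*(m:ℝ) + 8*δ*(t:ℝ)) = -(8*δ^2*(m:ℝ)) + -(8*δ*(t:ℝ)) by ring,
        Real.exp_add]
      field_simp
      ring
    rw [lhs_eq, hBeq]
    have h1m : (0:ℝ) ≤ 1 - 4*δ^2 := by nlinarith
    have hrtm : (t:ℝ) ≤ m := by exact_mod_cast htm
    have hrmS : (m:ℝ) ≤ S := by exact_mod_cast hmS
    have hrt0 : (0:ℝ) ≤ (t:ℝ) := Nat.cast_nonneg t
    have hr0 : (0:ℝ) ≤ r := div_nonneg (by linarith) (by linarith)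
    apply mul_le_mul hf1 ?_ (by positivity) (by positivity)
    apply mul_le_mul hf2 ?_ (by positivity) (pow_nonneg h1m m)
    apply mul_le_mul hf3 ?_ (by positivity) (pow_nonneg hq0 e)
    exact mul_le_mul hrt_half hf4 (by positivity) (pow_nonneg hr0 t)
  -- the window
  have hterm : ∀ k ∈ Finset.Icc (m - t) m,
      B ≤ (S.choose k : ℝ) * (1/2+δ)^k * (1/2-δ)^(S-k) := by
    intro k hk
    rw [Finset.mem_Icc] at hk
    exact term_ge S m t k δ hδ0 hδ8 (by omega) h2m htm hk.1 hk.2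
  have hsubset : Finset.Icc (m - t) m ⊆ Finset.range (S+1) := by
    intro k hk
    rw [Finset.mem_Icc] at hk
    rw [Finset.mem_range]
    omega
  have hnonneg : ∀ i ∈ Finset.range (S+1), i ∉ Finset.Icc (m-t) m →
      (0:ℝ) ≤ (if 2 * i ≤ S then (S.choose i : ℝ) * (1/2+δ)^i * (1/2-δ)^(S-i) else 0) := by
    intro i _ _
    split
    · apply mul_nonneg (mul_nonneg (Nat.cast_nonneg _) (by positivity)) (by positivity)
    · exact le_rfl
  have hstep1 : ∑ k ∈ Finset.Icc (m-t) m,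
        (if 2 * k ≤ S then (S.choose k : ℝ) * (1/2+δ)^k * (1/2-δ)^(S-k) else 0) ≤
      ∑ k ∈ Finset.range (S + 1),
        (if 2 * k ≤ S then (S.choose k : ℝ) * (1/2+δ)^k * (1/2-δ)^(S-k) else 0) :=
    Finset.sum_le_sum_of_subset_of_nonneg hsubset hnonneg
  have hstep2 : ∑ k ∈ Finset.Icc (m-t) m,
        (if 2 * k ≤ S then (S.choose k : ℝ) * (1/2+δ)^k * (1/2-δ)^(S-k) else 0) =
      ∑ k ∈ Finset.Icc (m-t) m, (S.choose k : ℝ) * (1/2+δ)^k * (1/2-δ)^(S-k) := by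
    apply Finset.sum_congr rfl
    intro k hk
    rw [Finset.mem_Icc] at hk
    rw [if_pos (by omega)]
  have hcard : (Finset.Icc (m-t) m).card = t + 1 := by
    rw [Nat.card_Icc]; omega
  have hstep3 : ((t:ℝ) + 1) * B ≤
      ∑ k ∈ Finset.Icc (m-t) m, (S.choose k : ℝ) * (1/2+δ)^k * (1/2-δ)^(S-k) := by
    have h := Finset.card_nsmul_le_sum (Finset.Icc (m-t) m)
      (fun k => (S.choose k : ℝ) * (1/2+δ)^k * (1/2-δ)^(S-k)) B hterm
    rw [hcard, nsmul_eq_mul] at h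
    push_cast at h
    linarith
  -- sqrt bounds
  have hsqS_real : Real.sqrt S < (sq:ℝ) + 1 := by
    have h1 : (S:ℝ) < ((sq:ℝ)+1)^2 := by
      have h2 := (Nat.cast_lt (α := ℝ)).mpr (hsq_def ▸ Nat.lt_succ_sqrt S)
      push_cast at h2
      nlinarith
    calc Real.sqrt S < Real.sqrt (((sq:ℝ)+1)^2) := Real.sqrt_lt_sqrt (Nat.cast_nonneg _) h1
      _ = (sq:ℝ)+1 := Real.sqrt_sq (by positivity)
  have h3t1 : Real.sqrt S ≤ 3*((t:ℝ)+1) := by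
    have h1 : sq + 1 ≤ 3*(t+1) := by omega
    have h2 := (Nat.cast_le (α := ℝ)).mpr h1
    push_cast at h2
    linarith
  have hsqrtS0 : (0:ℝ) < Real.sqrt S := Real.sqrt_pos.mpr hS0
  have hSsq : Real.sqrt S * Real.sqrt S = S := Real.mul_self_sqrt hS0.le
  have hlow : Real.exp (-(8*δ^2*(m:ℝ) + 8*δ*(t:ℝ))) / (36 * Real.sqrt S) ≤ ((t:ℝ)+1) * B := by
    have h1 : 1 / (36 * Real.sqrt S) ≤ ((t:ℝ)+1) / (12 * S) := by
      rw [div_le_div_iff₀ (by positivity) (by positivity)]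
      nlinarith
    calc Real.exp (-(8*δ^2*(m:ℝ) + 8*δ*(t:ℝ))) / (36 * Real.sqrt S)
        = Real.exp (-(8*δ^2*(m:ℝ) + 8*δ*(t:ℝ))) * (1 / (36 * Real.sqrt S)) := by ring
      _ ≤ Real.exp (-(8*δ^2*(m:ℝ) + 8*δ*(t:ℝ))) * (((t:ℝ)+1) / (12 * S)) := by
          apply mul_le_mul_of_nonneg_left h1 (Real.exp_nonneg _)
      _ = ((t:ℝ)+1) * (Real.exp (-(8*δ^2*(m:ℝ) + 8*δ*(t:ℝ))) / (12 * S)) := by ring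
      _ ≤ ((t:ℝ)+1) * B := by
          apply mul_le_mul_of_nonneg_left hB_lb (by positivity)
  linarith [hstep1, hstep2 ▸ hstep1, hstep3]
set_option maxHeartbeats 1600000 in
/-- The key numeric contradiction step. -/
lemma contradiction_step (a c : ℝ) (ha : 0 < a) (hc : 1 ≤ c) (n S m t : ℕ) (δ K A L : ℝ)
    (hK0 : 0 < K) (hK1 : K ≤ 1) (hKa : K ≤ 1/(10*Real.sqrt a))
    (hδ0 : 0 < δ) (hδ : δ < K / Real.sqrt n)
    (hn1 : (1:ℝ) ≤ (n:ℝ))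
    (hL_def : L = Real.log n)
    (hLA : 4*|A| + 200 ≤ L)
    (hA_def : A = Real.log (36 * Real.sqrt (2*a)))
    (hS_lb : a*(n:ℝ)*L ≤ (S:ℝ)) (hS_ub : (S:ℝ) ≤ a*(n:ℝ)*L + 1)
    (hS144 : 144 ≤ S) (hm : m = S/2) (ht : t = Nat.sqrt S / 3) :
    (n:ℝ)^(-c) < Real.exp (-(8*δ^2*(m:ℝ) + 8*δ*(t:ℝ))) / (36 * Real.sqrt S) := by
  have hn0 : (0:ℝ) < n := by linarith
  have hsqrtn0 : (0:ℝ) < Real.sqrt n := Real.sqrt_pos.mpr hn0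
  have hsqa0 : (0:ℝ) < Real.sqrt a := Real.sqrt_pos.mpr ha
  have hAabs : (0:ℝ) ≤ |A| := abs_nonneg _
  have hL200 : (200:ℝ) ≤ L := by linarith
  have hL1 : (1:ℝ) ≤ L := by linarith
  have hS0 : (0:ℝ) < S := by
    have : (144:ℝ) ≤ (S:ℝ) := by exact_mod_cast hS144
    linarith
  have hS144R : (144:ℝ) ≤ (S:ℝ) := by exact_mod_cast hS144
  have hanL1 : (1:ℝ) ≤ a*n*L := by linarith
  have hanL0' : (0:ℝ) ≤ a*n*L := by linarith
  have hsqrtS0 : (0:ℝ) < Real.sqrt S := Real.sqrt_pos.mpr hS0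
  have hKsq : K^2 ≤ 1/(100*a) := by
    have h2 : (1/(10*Real.sqrt a))^2 = 1/(100*a) := by
      rw [div_pow, one_pow, mul_pow, Real.sq_sqrt ha.le]
      norm_num
    calc K^2 ≤ (1/(10*Real.sqrt a))^2 := pow_le_pow_left₀ hK0.le hKa 2
      _ = 1/(100*a) := h2
  have hδsq : δ^2 < K^2 / n := by
    have h1 : δ^2 < (K / Real.sqrt n)^2 := by
      apply sq_lt_sq' _ hδ
      linarith
    have h2 : (K / Real.sqrt n)^2 = K^2 / n := by
      rw [div_pow, Real.sq_sqrt hn0.le]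
    linarith [h1.trans_eq h2]
  have hSn : (S:ℝ)/n ≤ a*L + 1 := by
    rw [div_le_iff₀ hn0]
    nlinarith
  have hm_real : (m:ℝ) ≤ (S:ℝ)/2 := by
    have h : 2*m ≤ S := by omega
    have h2 : (2*(m:ℝ)) ≤ S := by exact_mod_cast h
    linarith
  have hX1 : 8*δ^2*(m:ℝ) ≤ L/25 + 4 := by
    have hm0 : (0:ℝ) ≤ (m:ℝ) := Nat.cast_nonneg m
    have h1 : 8*δ^2*(m:ℝ) ≤ 4*δ^2*S := by
      nlinarith [mul_le_mul_of_nonneg_left hm_real (by positivity : (0:ℝ) ≤ 8*δ^2)]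
    have h2 : 4*δ^2*(S:ℝ) ≤ 4*(K^2/n)*S := by
      apply mul_le_mul_of_nonneg_right _ hS0.le
      linarith [hδsq]
    have h4 : 4*K^2*((S:ℝ)/n) ≤ 4*K^2*(a*L+1) :=
      mul_le_mul_of_nonneg_left hSn (by positivity)
    have h6 : 4*K^2*a ≤ 1/25 := by
      have h7 : 4*K^2*a ≤ 4*(1/(100*a))*a := by nlinarith
      calc 4*K^2*a ≤ 4*(1/(100*a))*a := h7
        _ = 1/25 := by field_simp; ring
    have h7 : 4*K^2 ≤ 4 := by nlinarith
    have h8 : 4*(K^2/n)*(S:ℝ) = 4*K^2*((S:ℝ)/n) := by ring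
    have h9 : 4*K^2*(a*L+1) ≤ L/25 + 4 := by
      nlinarith [mul_le_mul_of_nonneg_right h6 (by linarith : (0:ℝ) ≤ L)]
    linarith [h1, h2, h4, h9, h8.le, h8.ge]
  have hsqrtS_le : Real.sqrt ((S:ℝ)) ≤ Real.sqrt (a*n*L) + 1 := by
    have h2 : Real.sqrt (S:ℝ) ≤ Real.sqrt (a*n*L + 1) := Real.sqrt_le_sqrt hS_ub
    have h3 : Real.sqrt (a*n*L + 1) ≤ Real.sqrt (a*n*L) + 1 := by
      have h4 : a*n*L + 1 ≤ (Real.sqrt (a*n*L) + 1)^2 := by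
        have h5 := Real.sq_sqrt hanL0'
        nlinarith [Real.sqrt_nonneg (a*n*L)]
      calc Real.sqrt (a*n*L + 1) ≤ Real.sqrt ((Real.sqrt (a*n*L) + 1)^2) :=
            Real.sqrt_le_sqrt h4
        _ = Real.sqrt (a*n*L) + 1 := Real.sqrt_sq (by positivity)
    linarith
  have ht_le : 3*(t:ℝ) ≤ Real.sqrt S := by
    have h1 : 3*t ≤ Nat.sqrt S := by omega
    have h2 := (Nat.cast_le (α := ℝ)).mpr h1
    push_cast at h2
    have h3 : ((Nat.sqrt S : ℕ):ℝ) ≤ Real.sqrt S := by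
      have h4 : (Nat.sqrt S) * (Nat.sqrt S) ≤ S := Nat.sqrt_le S
      have h5 := (Nat.cast_le (α := ℝ)).mpr h4
      push_cast at h5
      calc ((Nat.sqrt S : ℕ):ℝ) = Real.sqrt (((Nat.sqrt S : ℕ):ℝ)^2) :=
            (Real.sqrt_sq (Nat.cast_nonneg _)).symm
        _ ≤ Real.sqrt S := Real.sqrt_le_sqrt (by nlinarith)
    linarith
  have hsqrt_split : Real.sqrt (a*n*L) = Real.sqrt a * Real.sqrt n * Real.sqrt L := by
    rw [Real.sqrt_mul (by positivity), Real.sqrt_mul ha.le]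
  have hX2 : 8*δ*(t:ℝ) ≤ (3/10)*Real.sqrt L + 3 := by
    have ht0 : (0:ℝ) ≤ (t:ℝ) := Nat.cast_nonneg t
    have h1 : 8*δ*(t:ℝ) ≤ 8*δ*(Real.sqrt S / 3) := by
      apply mul_le_mul_of_nonneg_left _ (by positivity)
      linarith
    have h2 : 8*δ*(Real.sqrt S/3) ≤ 8*(K/Real.sqrt n)*(Real.sqrt S/3) := by
      apply mul_le_mul_of_nonneg_right _ (by positivity)
      linarith [hδ]
    have h3 : 8*(K/Real.sqrt n)*(Real.sqrt S/3) ≤ 3*K*(Real.sqrt (a*n*L)+1)/Real.sqrt n := by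
      have e1 : 8*(K/Real.sqrt n)*(Real.sqrt S/3) = (8*K*Real.sqrt (S:ℝ)/3)/Real.sqrt n := by
        ring
      rw [e1]
      gcongr
      nlinarith [mul_le_mul_of_nonneg_left hsqrtS_le hK0.le]
    have h4 : 3*K*(Real.sqrt (a*n*L)+1)/Real.sqrt n ≤ (3/10)*Real.sqrt L + 3 := by
      rw [hsqrt_split, div_le_iff₀ hsqrtn0]
      have hKa2 : 10*K*Real.sqrt a ≤ 1 := by
        calc 10*K*Real.sqrt a ≤ 10*(1/(10*Real.sqrt a))*Real.sqrt a := by nlinarith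
          _ = 1 := by field_simp
      have hsL0 : (0:ℝ) ≤ Real.sqrt L := Real.sqrt_nonneg _
      have hsn1 : (1:ℝ) ≤ Real.sqrt n := by
        calc (1:ℝ) = Real.sqrt 1 := Real.sqrt_one.symm
          _ ≤ Real.sqrt n := Real.sqrt_le_sqrt hn1
      nlinarith [mul_le_mul_of_nonneg_right hKa2 (mul_nonneg hsL0 hsqrtn0.le)]
    linarith
  have hsqrtn_exp : Real.sqrt n = Real.exp (L/2) := by
    have h1 : (n:ℝ) = Real.exp (L/2)^2 := by
      rw [← Real.exp_nat_mul]
      push_cast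
      rw [show (2:ℝ)*(L/2) = L by ring, hL_def, Real.exp_log hn0]
    rw [h1, Real.sqrt_sq (Real.exp_nonneg _)]
  have hsqrtL_exp : Real.sqrt L ≤ Real.exp (Real.sqrt L) := by
    have h := Real.add_one_le_exp (Real.sqrt L)
    linarith [Real.sqrt_nonneg L]
  have h36 : (0:ℝ) < 36 * Real.sqrt (2*a) := by positivity
  have h36exp : 36 * Real.sqrt (2*a) = Real.exp A := by
    rw [hA_def, Real.exp_log h36]
  have hS2anL : (S:ℝ) ≤ 2*(a*n*L) := by linarith
  have hsqrtS_le2 : Real.sqrt (S:ℝ) ≤ Real.sqrt (2*a) * Real.exp (L/2) * Real.sqrt L := by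
    calc Real.sqrt (S:ℝ) ≤ Real.sqrt (2*(a*n*L)) := Real.sqrt_le_sqrt hS2anL
      _ = Real.sqrt (2*a) * Real.sqrt n * Real.sqrt L := by
          rw [show 2*(a*(n:ℝ)*L) = (2*a)*((n:ℝ)*L) by ring,
            Real.sqrt_mul (by positivity : (0:ℝ) ≤ 2*a) ((n:ℝ)*L),
            Real.sqrt_mul (by positivity : (0:ℝ) ≤ (n:ℝ)) L]
          ring
      _ = Real.sqrt (2*a) * Real.exp (L/2) * Real.sqrt L := by rw [hsqrtn_exp]
  have hrc : (n:ℝ)^(-c) ≤ (n:ℝ)^(-(1:ℝ)) :=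
    Real.rpow_le_rpow_of_exponent_le hn1 (by linarith)
  have hrn : (n:ℝ)^(-(1:ℝ)) = Real.exp (-L) := by
    rw [Real.rpow_def_of_pos hn0]
    congr 1
    rw [hL_def]; ring
  have hXA : (8*δ^2*(m:ℝ) + 8*δ*(t:ℝ)) + A + Real.sqrt L < L/2 := by
    have hsqrtL_le : Real.sqrt L ≤ L/10 + 5/2 := by
      nlinarith [Real.sq_sqrt (by positivity : (0:ℝ) ≤ L), Real.sqrt_nonneg L,
        sq_nonneg (Real.sqrt L - 5)]
    have hAle : A ≤ |A| := le_abs_self A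
    linarith
  have hkey : 36 * Real.sqrt S * Real.exp (-L) <
      Real.exp (-(8*δ^2*(m:ℝ) + 8*δ*(t:ℝ))) := by
    have h1 : 36 * Real.sqrt S ≤ Real.exp (A + L/2 + Real.sqrt L) := by
      calc 36 * Real.sqrt S ≤ 36 * (Real.sqrt (2*a) * Real.exp (L/2) * Real.sqrt L) := by
            linarith [hsqrtS_le2]
        _ = (36 * Real.sqrt (2*a)) * Real.exp (L/2) * Real.sqrt L := by ring
        _ ≤ Real.exp A * Real.exp (L/2) * Real.exp (Real.sqrt L) := by
            rw [h36exp]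
            exact mul_le_mul_of_nonneg_left hsqrtL_exp (by positivity)
        _ = Real.exp (A + L/2 + Real.sqrt L) := by rw [← Real.exp_add, ← Real.exp_add]
    have h2 : Real.exp (A + L/2 + Real.sqrt L) * Real.exp (-L) <
        Real.exp (-(8*δ^2*(m:ℝ) + 8*δ*(t:ℝ))) := by
      rw [← Real.exp_add]
      apply Real.exp_lt_exp.mpr
      linarith
    calc 36 * Real.sqrt S * Real.exp (-L) ≤
        Real.exp (A + L/2 + Real.sqrt L) * Real.exp (-L) :=
          mul_le_mul_of_nonneg_right h1 (Real.exp_nonneg _)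
      _ < _ := h2
  calc (n:ℝ)^(-c) ≤ Real.exp (-L) := by rw [← hrn]; exact hrc
    _ < Real.exp (-(8*δ^2*(m:ℝ) + 8*δ*(t:ℝ))) / (36 * Real.sqrt S) := by
        rw [lt_div_iff₀ (by positivity)]
        linarith [hkey, mul_comm (Real.exp (-L)) (36 * Real.sqrt (S:ℝ))]
set_option maxHeartbeats 1600000 in
/-- For `X ~ Binomial(S, 1/2 + δ)` with `S = ⌈a·n·log n⌉` and `0 < δ ≤ 1/3`:
for every `a > 0` and `c ≥ 1` there is a constant `K > 0` such that for all
sufficiently large `n`, if `Pr[X ≤ S/2] ≤ n^(−c)` then `δ ≥ K/√n`. -/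
theorem majority_input_margin_lower_bound (a : ℝ) (ha : 0 < a) (c : ℝ) (hc : 1 ≤ c) :
    ∃ K : ℝ, 0 < K ∧ ∃ N₀ : ℕ, 2 ≤ N₀ ∧ ∀ n : ℕ, N₀ ≤ n →
      ∀ δ : ℝ, 0 < δ → δ ≤ 1/3 →
      (∑ k ∈ Finset.range (⌈a * (n : ℝ) * Real.log n⌉₊ + 1),
          (if 2 * k ≤ ⌈a * (n : ℝ) * Real.log n⌉₊ then
            ((⌈a * (n : ℝ) * Real.log n⌉₊).choose k : ℝ) * (1/2 + δ)^k *
              (1 - (1/2 + δ))^(⌈a * (n : ℝ) * Real.log n⌉₊ - k)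
          else 0)) ≤ (n : ℝ) ^ (-c) →
      K / Real.sqrt n ≤ δ := by
  obtain ⟨A, hA_def⟩ : ∃ A, A = Real.log (36 * Real.sqrt (2*a)) := ⟨_, rfl⟩
  obtain ⟨L₀, hL0_def⟩ : ∃ L₀, L₀ = 200 + 4*|A| := ⟨_, rfl⟩
  obtain ⟨K, hK_def⟩ : ∃ K, K = min 1 (1/(10*Real.sqrt a)) := ⟨_, rfl⟩
  have hsqa0 : (0:ℝ) < Real.sqrt a := Real.sqrt_pos.mpr ha
  have hK0 : (0:ℝ) < K := by rw [hK_def]; exact lt_min one_pos (by positivity)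
  refine ⟨K, hK0, max (max 144 (⌈(144:ℝ)/a⌉₊ + 1)) (⌈Real.exp L₀⌉₊ + 1),
    le_trans (by norm_num : (2:ℕ) ≤ 144) (le_trans (le_max_left _ _) (le_max_left _ _)), ?_⟩
  intro n hn δ hδ0 hδ3 hyp
  by_contra hcon
  push_neg at hcon
  have hn144 : 144 ≤ n :=
    le_trans (le_trans (le_max_left _ _) (le_max_left _ _)) hn
  have hnL : ⌈Real.exp L₀⌉₊ + 1 ≤ n := le_trans (le_max_right _ _) hn
  have hnA : ⌈(144:ℝ)/a⌉₊ + 1 ≤ n :=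
    le_trans (le_trans (le_max_right _ _) (le_max_left _ _)) hn
  have hn0 : (0:ℝ) < n := by positivity
  have hn1 : (1:ℝ) ≤ n := by
    have h : (1:ℕ) ≤ n := by omega
    exact_mod_cast h
  obtain ⟨L, hL_def⟩ : ∃ L, L = Real.log n := ⟨_, rfl⟩
  have hL0 : L₀ < L := by
    rw [hL_def, Real.lt_log_iff_exp_lt hn0]
    have h2 : Real.exp L₀ ≤ (⌈Real.exp L₀⌉₊ : ℝ) := Nat.le_ceil _
    have h3 : ((⌈Real.exp L₀⌉₊ + 1 : ℕ) : ℝ) ≤ n := by exact_mod_cast hnL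
    push_cast at h3
    linarith
  have hAabs : (0:ℝ) ≤ |A| := abs_nonneg _
  have hL200 : 200 < L := by rw [hL0_def] at hL0; linarith
  have hL1 : (1:ℝ) ≤ L := by linarith
  have hna : (144:ℝ) ≤ a * n := by
    have h2 : (144:ℝ)/a ≤ ⌈(144:ℝ)/a⌉₊ := Nat.le_ceil _
    have h3 : ((⌈(144:ℝ)/a⌉₊ + 1 : ℕ) : ℝ) ≤ n := by exact_mod_cast hnA
    push_cast at h3
    have h4 : (144:ℝ)/a ≤ n := by linarith
    rw [div_le_iff₀ ha] at h4
    linarith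
  obtain ⟨S, hS_def⟩ : ∃ S, S = ⌈a * (n : ℝ) * Real.log n⌉₊ := ⟨_, rfl⟩
  rw [← hS_def] at hyp
  have hanL0 : (0:ℝ) ≤ a * n * Real.log n := by
    have h : (0:ℝ) ≤ Real.log n := by rw [← hL_def]; linarith
    positivity
  have hS_lb : a * n * L ≤ (S:ℝ) := by
    rw [hS_def, hL_def]; exact Nat.le_ceil _
  have hS_ub : (S:ℝ) ≤ a * n * L + 1 := by
    rw [hS_def, hL_def]
    exact (Nat.ceil_lt_add_one hanL0).le
  have hanL144 : (144:ℝ) ≤ a * n * L := by nlinarith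
  have hS144 : 144 ≤ S := by
    have h : (144:ℝ) ≤ (S:ℝ) := le_trans hanL144 hS_lb
    exact_mod_cast h
  have hsqrtn12 : (12:ℝ) ≤ Real.sqrt n := by
    have h : ((144:ℝ)) ≤ (n:ℝ) := by exact_mod_cast hn144
    calc (12:ℝ) = Real.sqrt 144 := by
          rw [show (144:ℝ) = 12^2 by norm_num, Real.sqrt_sq]; norm_num
      _ ≤ Real.sqrt n := Real.sqrt_le_sqrt h
  have hK1 : K ≤ 1 := by rw [hK_def]; exact min_le_left _ _
  have hKa : K ≤ 1/(10*Real.sqrt a) := by rw [hK_def]; exact min_le_right _ _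
  have hδ8 : δ ≤ 1/8 := by
    have h : K / Real.sqrt n ≤ 1 / 12 :=
      div_le_div₀ (by norm_num) hK1 (by norm_num) hsqrtn12
    linarith [hcon]
  have hq_eq : (1:ℝ) - (1/2 + δ) = 1/2 - δ := by ring
  rw [hq_eq] at hyp
  have hw := window_lb S hS144 δ hδ0 hδ8
  obtain ⟨m, hm_def⟩ : ∃ m, m = S/2 := ⟨_, rfl⟩
  obtain ⟨t, ht_def⟩ : ∃ t, t = Nat.sqrt S / 3 := ⟨_, rfl⟩
  rw [← hm_def, ← ht_def] at hw
  have hchain : Real.exp (-(8*δ^2*(m:ℝ) + 8*δ*(t:ℝ))) / (36 * Real.sqrt S) ≤ (n:ℝ)^(-c) :=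
    le_trans hw hyp
  have hLA : 4*|A| + 200 ≤ L := by rw [hL0_def] at hL0; linarith
  have hfinal := contradiction_step a c ha hc n S m t δ K A L hK0 hK1 hKa hδ0 hcon hn1
    hL_def hLA hA_def hS_lb hS_ub hS144 hm_def ht_def
  linarith [hchain, hfinal]
end
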